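/- Let n ≥ 1 and identify the space 𝕊^n of complex symmetric n×n matrices with ℂ^{n(n+1)/2} via the entries k_ij for i ≤ j. Let L ⊆ 𝕊^n be the linear subspace of symmetric matrices all of whose off-diagonal entries are equal to one another (this is the space L_{S_n} of the Brownian motion star tree model on n+1 leaves). Let Y = { Σ^{-1} : Σ ∈ L, Σ invertible } ⊆ 𝕊^n, and let cl(Y) denote the Zariski closure of Y, i.e., the zero locus in 𝕊^n ≅ ℂ^{n(n+1)/2} of the vanishing ideal of Y. Let L^⊥ be the orthogonal complement of L in 𝕊^n with respect to the pairing ⟨A,B⟩ = trace(AB). Then cl(Y) ∩ L^⊥ = {0}, i.e., the only matrix lying in both cl(Y) and L^⊥ is the zero matrix. -/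

import Mathlib

/-- The index set of entries `k_ij`, `i ≤ j`, of a symmetric `n × n` matrix; via these
coordinates the space `𝕊^n` of complex symmetric matrices is identified with
`ℂ^{n(n+1)/2}`. -/
abbrev SymIdx (n : ℕ) := {q : Fin n × Fin n // q.1 ≤ q.2}

/-- The symmetric matrix corresponding to a coordinate vector `x ∈ ℂ^{SymIdx n}`. -/
noncomputable def toMat (n : ℕ) (x : SymIdx n → ℂ) : Matrix (Fin n) (Fin n) ℂ :=
  Matrix.of fun i j =>
    if h : i ≤ j then x ⟨(i, j), h⟩ else x ⟨(j, i), le_of_not_ge h⟩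

/-- The linear space `L = L_{S_n}` of symmetric matrices all of whose off-diagonal
entries are equal to one another (the Brownian motion star tree model on `n+1`
leaves). -/
def Lstar (n : ℕ) : Set (Matrix (Fin n) (Fin n) ℂ) :=
  {S | S.IsSymm ∧ ∀ i j i' j' : Fin n, i ≠ j → i' ≠ j' → S i j = S i' j'}

/-- The orthogonal complement `L^⊥` of `L = L_{S_n}` inside the space of complex
symmetric matrices, with respect to the pairing `⟨A, B⟩ = trace (A * B)`. -/
def LstarPerp (n : ℕ) : Set (Matrix (Fin n) (Fin n) ℂ) :=
  {K | K.IsSymm ∧ ∀ S ∈ Lstar n, (K * S).trace = 0}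

/-- The set `Y = {Σ⁻¹ : Σ ∈ L, Σ invertible}`, in the coordinates `SymIdx n`. -/
def Yset (n : ℕ) : Set (SymIdx n → ℂ) :=
  {x | ∃ S : Matrix (Fin n) (Fin n) ℂ, S ∈ Lstar n ∧ IsUnit S ∧
    ∀ q : SymIdx n, x q = S⁻¹ q.1.1 q.1.2}

/-!
Write `Σ ∈ L` as `diagonal d + a • J` with `J` the all-ones matrix. For `K = Σ⁻¹` the identity
`Σ K = 1` reads `d i * K i j + w j = δ i j` with `w j = a * ∑ m, K m j`, and at most one `d i`
vanishes; clearing the nonzero `d`'s shows that `K` satisfies the quadratic relations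
`K i j * K k l = K i l * K k j` and `K i j * K k k - K i k * K j k = K i k * K j j - K i j * K j k`
for distinct indices, so they hold on `cl(Y)`. A point of `L^⊥` has zero diagonal and zero total
sum. With zero diagonal the relations say that, if `c = K p q ≠ 0`, then `c • K` agrees off the
diagonal with `u uᵀ` where each `u r ∈ {0, c}`; the total sum is then `c * m * (m - 1)` with
`m ≥ 2` the number of nonzero `u r`, a contradiction. Conversely `0 ∈ cl(Y)`, as `u • 1 ∈ Y` for
`u ≠ 0` and the Zariski closure contains the Euclidean closure.
-/

open Matrix MvPolynomial Filter Topology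

namespace StarTree

section InverseRelations

variable {R ι : Type*} [CommRing R] [IsDomain R] [DecidableEq ι] {K : Matrix ι ι R} {d w : ι → R}

lemma eq_of_coeff_eq_zero (hd : ∀ i j, d i * K i j + w j = (1 : Matrix ι ι R) i j)
    {p q : ι} (hp : d p = 0) (hq : d q = 0) : p = q := by
  by_contra hpq
  have hpp := hd p p
  have hqp := hd q p
  simp only [hp, hq, zero_mul, zero_add, one_apply_eq, one_apply_ne (Ne.symm hpq)]
    at hpp hqp
  exact one_ne_zero (hpp.symm.trans hqp)

lemma mul_eq_mul_of_coeff_ne_zero (hd : ∀ i j, d i * K i j + w j = (1 : Matrix ι ι R) i j)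
    {i j k l : ι} (hi : d i ≠ 0) (hk : d k ≠ 0)
    (hij : i ≠ j) (hil : i ≠ l) (hkj : k ≠ j) (hkl : k ≠ l) :
    K i j * K k l = K i l * K k j := by
  have eij := hd i j
  have eil := hd i l
  have ekj := hd k j
  have ekl := hd k l
  simp only [one_apply_ne hij, one_apply_ne hil, one_apply_ne hkj, one_apply_ne hkl]
    at eij eil ekj ekl
  apply mul_left_cancel₀ (mul_ne_zero hi hk)
  linear_combination d k * K k l * eij - w j * ekl - d k * K k j * eil + w l * ekj

lemma mul_eq_mul_of_isSymm (hd : ∀ i j, d i * K i j + w j = (1 : Matrix ι ι R) i j)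
    (hK : K.IsSymm) {i j k l : ι} (hij : i ≠ j) (hil : i ≠ l) (hkj : k ≠ j) (hkl : k ≠ l) :
    K i j * K k l = K i l * K k j := by
  by_cases h : d i ≠ 0 ∧ d k ≠ 0
  · exact mul_eq_mul_of_coeff_ne_zero hd h.1 h.2 hij hil hkj hkl
  · have hne : ∀ m, m ≠ i → m ≠ k → d m ≠ 0 := fun m hmi hmk hm =>
      h ⟨fun hi => hmi (eq_of_coeff_eq_zero hd hm hi),
        fun hk => hmk (eq_of_coeff_eq_zero hd hm hk)⟩
    have h' := mul_eq_mul_of_coeff_ne_zero hd (hne j hij.symm hkj.symm) (hne l hil.symm hkl.symm)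
      hij.symm hkj.symm hil.symm hkl.symm
    rw [hK.apply i j, hK.apply k l, hK.apply k j, hK.apply i l] at h'
    linear_combination h'

lemma minor_eq_minor_of_coeff_ne_zero (hd : ∀ i j, d i * K i j + w j = (1 : Matrix ι ι R) i j)
    (hK : K.IsSymm) {i j k : ι} (hk : d k ≠ 0) (hij : i ≠ j) (hik : i ≠ k) (hjk : j ≠ k) :
    K i j * K k k - K i k * K j k = K i k * K j j - K i j * K j k := by
  by_cases hj : d j = 0
  · have hi : d i ≠ 0 := fun hi => hij (eq_of_coeff_eq_zero hd hi hj)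
    -- `d j = 0` forces `w` to be the `j`-th unit vector
    have hw : ∀ m, w m = (1 : Matrix ι ι R) j m := fun m => by simpa [hj] using hd j m
    have eik := hd i k
    have ekk := hd k k
    have ekj := hd k j
    rw [hw, one_apply_ne hik, one_apply_ne hjk] at eik
    rw [hw, one_apply_ne hjk, one_apply_eq] at ekk
    rw [hw, one_apply_eq, one_apply_ne hjk.symm] at ekj
    have hKik : K i k = 0 := by simpa [hi] using eik
    have hKkk : K k k = -K j k := by
      rw [← hK.apply j k]
      refine mul_left_cancel₀ hk ?_
      linear_combination ekk + ekj
    rw [hKik, hKkk]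
    ring
  · have eA := hd j i
    have eB := hd k k
    have eC := hd k i
    have eD := hd j k
    have eE := hd j j
    have eG := hd k j
    rw [one_apply_ne hij.symm, hK.apply i j] at eA
    rw [one_apply_eq] at eB eE
    rw [one_apply_ne hik.symm, hK.apply i k] at eC
    rw [one_apply_ne hjk] at eD
    rw [one_apply_ne hjk.symm, hK.apply j k] at eG
    refine mul_left_cancel₀ (mul_ne_zero hj hk) ?_
    linear_combination (d k * K k k + d k * K j k) * eA - w i * eB
      - (d j * K j k + d j * K j j) * eC + w i * eD + w i * eE - w i * eG

lemma minor_eq_minor (hd : ∀ i j, d i * K i j + w j = (1 : Matrix ι ι R) i j)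
    (hK : K.IsSymm) {i j k : ι} (hij : i ≠ j) (hik : i ≠ k) (hjk : j ≠ k) :
    K i j * K k k - K i k * K j k = K i k * K j j - K i j * K j k := by
  by_cases hk : d k = 0
  · have hj : d j ≠ 0 := fun hj => hjk (eq_of_coeff_eq_zero hd hj hk)
    have h := minor_eq_minor_of_coeff_ne_zero hd hK hj hik hij hjk.symm
    rw [hK.apply j k] at h
    linear_combination -h
  · exact minor_eq_minor_of_coeff_ne_zero hd hK hk hij hik hjk

end InverseRelations

section Combinatorics

variable {R ι : Type*} [CommRing R] [IsDomain R]

lemma sum_mul_sum_ne_mul_sum [CharZero R] [Fintype ι] {u : ι → R} {c : R} (hc : c ≠ 0)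
    (hu : ∀ r, u r * u r = c * u r) {p q : ι} (hpq : p ≠ q) (hp : u p ≠ 0) (hq : u q ≠ 0) :
    (∑ r, u r) * (∑ r, u r) ≠ c * ∑ r, u r := by
  classical
  set T := Finset.univ.filter (fun r => u r ≠ 0)
  have hval : ∀ r, u r = if u r ≠ 0 then c else 0 := by
    intro r
    split_ifs with h
    · exact mul_left_cancel₀ h (by rw [hu r, mul_comm])
    · exact not_not.mp h
  have hsum : ∑ r, u r = T.card * c := by
    rw [Finset.sum_congr rfl (fun r _ => hval r), ← Finset.sum_filter, Finset.sum_const,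
      nsmul_eq_mul]
  have hT : 1 < T.card := Finset.one_lt_card.mpr ⟨p, by simpa [T], q, by simpa [T], hpq⟩
  have hT0 : (T.card : R) ≠ 0 := by exact_mod_cast (by omega : T.card ≠ 0)
  have hT1 : (T.card : R) - 1 ≠ 0 := sub_ne_zero.mpr (by exact_mod_cast (by omega : T.card ≠ 1))
  rw [hsum]
  intro h
  exact mul_ne_zero (mul_ne_zero hT0 hT1) (mul_ne_zero hc hc) (by linear_combination h)

variable {K : Matrix ι ι R} {p q : ι}

lemma apply_eq_apply_of_triangle (hK : K.IsSymm)
    (htri : ∀ i j k, i ≠ j → i ≠ k → j ≠ k → K j k * K i k = K j k * K i j)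
    (hc : K p q ≠ 0) (hpq : p ≠ q) {r : ι} (hrp : r ≠ p) (hrq : r ≠ q) : K q r = K p r := by
  rw [hK.apply r q, mul_left_cancel₀ hc (htri r p q hrp hrq hpq), hK.apply p r]

variable [DecidableEq ι]

lemma update_mul_self_of_triangle (hK : K.IsSymm)
    (htri : ∀ i j k, i ≠ j → i ≠ k → j ≠ k → K j k * K i k = K j k * K i j)
    (hc : K p q ≠ 0) (hpq : p ≠ q) (r : ι) :
    Function.update (K p) p (K p q) r * Function.update (K p) p (K p q) r =
      K p q * Function.update (K p) p (K p q) r := by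
  by_cases hrp : r = p
  · rw [hrp, Function.update_self]
  rw [Function.update_of_ne hrp]
  by_cases hrq : r = q
  · rw [hrq]
  have h := htri q r p (Ne.symm hrq) hpq.symm hrp
  rw [hK.apply p q, hK.apply p r, apply_eq_apply_of_triangle hK htri hc hpq hrp hrq] at h
  linear_combination -h

lemma mul_apply_eq_update_mul_update (hK : K.IsSymm)
    (htri : ∀ i j k, i ≠ j → i ≠ k → j ≠ k → K j k * K i k = K j k * K i j)
    (hquad : ∀ i j k l, i ≠ j → i ≠ l → k ≠ j → k ≠ l → K i j * K k l = K i l * K k j)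
    (hc : K p q ≠ 0) (hpq : p ≠ q) {r s : ι} (hrs : r ≠ s) :
    K p q * K r s = Function.update (K p) p (K p q) r * Function.update (K p) p (K p q) s := by
  have hrow {t : ι} (htp : t ≠ p) (htq : t ≠ q) : K q t = K p t :=
    apply_eq_apply_of_triangle hK htri hc hpq htp htq
  by_cases hrp : r = p
  · rw [hrp, Function.update_self, Function.update_of_ne (fun h => hrs (hrp.trans h.symm))]
  by_cases hsp : s = p
  · rw [hsp, Function.update_self, Function.update_of_ne hrp, ← hK.apply p r, mul_comm]
  rw [Function.update_of_ne hrp, Function.update_of_ne hsp]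
  by_cases hrq : r = q
  · rw [hrq, hrow hsp (hrq ▸ Ne.symm hrs)]
  by_cases hsq : s = q
  · rw [hsq, ← hK.apply r q, hrow hrp hrq, mul_comm]
  rw [hquad p q r s hpq (Ne.symm hsp) hrq hrs, ← hK.apply r q, hrow hrp hrq, mul_comm]

lemma eq_zero_of_triangle_relations [CharZero R] [Fintype ι] (hK : K.IsSymm)
    (hdiag : ∀ i, K i i = 0) (hsum : ∑ i, ∑ j, K i j = 0)
    (htri : ∀ i j k, i ≠ j → i ≠ k → j ≠ k → K j k * K i k = K j k * K i j)
    (hquad : ∀ i j k l, i ≠ j → i ≠ l → k ≠ j → k ≠ l → K i j * K k l = K i l * K k j) :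
    K = 0 := by
  ext p q
  rw [Matrix.zero_apply]
  by_contra hc
  have hpq : p ≠ q := by
    rintro rfl
    exact hc (hdiag p)
  set u := Function.update (K p) p (K p q)
  have hKu (r s : ι) : K p q * K r s = u r * u s - if r = s then K p q * u r else 0 := by
    by_cases hrs : r = s
    · rw [if_pos hrs, ← hrs, hdiag, update_mul_self_of_triangle hK htri hc hpq]
      ring
    · rw [if_neg hrs, sub_zero, mul_apply_eq_update_mul_update hK htri hquad hc hpq hrs]
  refine sum_mul_sum_ne_mul_sum hc (update_mul_self_of_triangle hK htri hc hpq) hpq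
    (by simpa [u] using hc) (by simpa [u, hpq.symm] using hc) ?_
  have h : K p q * ∑ r, ∑ s, K r s = 0 := by rw [hsum, mul_zero]
  simp only [Finset.mul_sum, hKu, Finset.sum_sub_distrib, Finset.sum_ite_eq, Finset.mem_univ,
    if_true] at h
  rw [Finset.sum_mul_sum, Finset.mul_sum]
  linear_combination h

end Combinatorics

lemma diagonal_add_of_const_mul_apply {R ι : Type*} [CommSemiring R] [Fintype ι] [DecidableEq ι]
    (d : ι → R) (a : R) (K : Matrix ι ι R) (i j : ι) :
    ((diagonal d + of fun _ _ => a : Matrix ι ι R) * K) i j = d i * K i j + a * ∑ m, K m j := by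
  simp [add_mul, mul_apply, Finset.mul_sum, Finset.sum_add_distrib, diagonal_apply]

variable {n : ℕ}

lemma exists_eq_diagonal_add_of_mem_Lstar {S : Matrix (Fin n) (Fin n) ℂ} (hS : S ∈ Lstar n) :
    ∃ (d : Fin n → ℂ) (a : ℂ), S = diagonal d + of fun _ _ => a := by
  by_cases h : ∃ i j : Fin n, i ≠ j
  · obtain ⟨i, j, hij⟩ := h
    refine ⟨fun k => S k k - S i j, S i j, ?_⟩
    ext k l
    by_cases hkl : k = l
    · simp [hkl]
    · simp [diagonal_apply_ne _ hkl, hS.2 k l i j hkl hij]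
  · push Not at h
    refine ⟨fun k => S k k, 0, ?_⟩
    ext k l
    simp [← h k l]

lemma exists_inverse_relation_of_mem_Lstar {S : Matrix (Fin n) (Fin n) ℂ} (hS : S ∈ Lstar n)
    (hU : IsUnit S) : ∃ d w : Fin n → ℂ, ∀ i j, d i * S⁻¹ i j + w j = (1 : Matrix _ _ ℂ) i j := by
  obtain ⟨d, a, hSda⟩ := exists_eq_diagonal_add_of_mem_Lstar hS
  refine ⟨d, fun j => a * ∑ m, S⁻¹ m j, fun i j => ?_⟩
  rw [← diagonal_add_of_const_mul_apply, ← hSda,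
    mul_nonsing_inv S ((isUnit_iff_isUnit_det S).mp hU)]

def symIdx (i j : Fin n) : SymIdx n :=
  if h : i ≤ j then ⟨(i, j), h⟩ else ⟨(j, i), le_of_not_ge h⟩

lemma toMat_apply (x : SymIdx n → ℂ) (i j : Fin n) : toMat n x i j = x (symIdx i j) := by
  rw [toMat, of_apply, symIdx]
  split_ifs <;> rfl

lemma apply_eq_toMat_apply (x : SymIdx n → ℂ) (q : SymIdx n) : x q = toMat n x q.1.1 q.1.2 := by
  rw [toMat, of_apply, dif_pos q.2]

lemma toMat_isSymm (x : SymIdx n → ℂ) : (toMat n x).IsSymm := by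
  ext i j
  rw [transpose_apply, toMat_apply, toMat_apply, symIdx, symIdx]
  rcases lt_trichotomy i j with h | rfl | h
  · rw [dif_neg (not_le.mpr h), dif_pos h.le]
  · rfl
  · rw [dif_pos h.le, dif_neg (not_le.mpr h)]

lemma toMat_zero : toMat n 0 = 0 := by
  ext i j
  rw [toMat_apply]
  rfl

/-- Renaming along `symIdx` turns a polynomial in the matrix entries into one in the coordinates
`k_ij`, `i ≤ j`, that vanishes on `Y`. -/
lemma eval_eq_zero_of_mem_zeroLocus {x : SymIdx n → ℂ}
    (hx : x ∈ zeroLocus ℂ (vanishingIdeal ℂ (Yset n))) (g : MvPolynomial (Fin n × Fin n) ℂ)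
    (hg : ∀ S ∈ Lstar n, IsUnit S → eval (fun ij => S⁻¹ ij.1 ij.2) g = 0) :
    eval (fun ij => toMat n x ij.1 ij.2) g = 0 := by
  have h := hx (rename (fun ij => symIdx ij.1 ij.2) g) <| by
    rintro y ⟨S, hS, hU, hy⟩
    have hyS : y ∘ (fun ij : Fin n × Fin n => symIdx ij.1 ij.2) = fun ij => S⁻¹ ij.1 ij.2 := by
      funext ⟨i, j⟩
      simp only [Function.comp_apply, symIdx]
      split_ifs
      · exact hy _
      · exact (hy _).trans (hS.1.inv.apply i j)
    rw [aeval_eq_eval, eval_rename, hyS]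
    exact hg S hS hU
  rw [aeval_eq_eval, eval_rename] at h
  simpa only [Function.comp_def, ← toMat_apply] using h

lemma apply_self_eq_zero_of_mem_LstarPerp {K : Matrix (Fin n) (Fin n) ℂ} (hK : K ∈ LstarPerp n)
    (i : Fin n) : K i i = 0 := by
  have h := hK.2 (diagonal (Pi.single i 1)) ⟨isSymm_diagonal _, fun a b a' b' hab hab' => by
    rw [diagonal_apply_ne _ hab, diagonal_apply_ne _ hab']⟩
  simpa [trace, mul_diagonal, Pi.single_apply] using h

lemma sum_sum_eq_zero_of_mem_LstarPerp {K : Matrix (Fin n) (Fin n) ℂ} (hK : K ∈ LstarPerp n) :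
    ∑ i, ∑ j, K i j = 0 := by
  have h := hK.2 (of fun _ _ => 1) ⟨by ext; rfl, fun _ _ _ _ _ _ => rfl⟩
  simpa [trace, mul_apply] using h

lemma closure_subset_zeroLocus_vanishingIdeal {σ K : Type*} [Field K] [TopologicalSpace K]
    [IsTopologicalRing K] [T1Space K] (V : Set (σ → K)) :
    closure V ⊆ zeroLocus K (vanishingIdeal K V) := fun _ hx p hp =>
  closure_minimal (fun y hy => hp y hy)
    (isClosed_singleton.preimage (continuous_eval p)) hx

lemma zero_mem_closure_Yset : (0 : SymIdx n → ℂ) ∈ closure (Yset n) := by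
  set f : ℂ → SymIdx n → ℂ := fun u q => (u • (1 : Matrix (Fin n) (Fin n) ℂ)) q.1.1 q.1.2
  have hf : Continuous f := by fun_prop
  have hf0 : f 0 = 0 := by
    funext q
    simp [f]
  have hmem (u : ℂ) (hu : u ≠ 0) : f u ∈ Yset n := by
    have hinv : u⁻¹ • (1 : Matrix (Fin n) (Fin n) ℂ) * u • 1 = 1 := by
      rw [smul_mul_smul_comm, inv_mul_cancel₀ hu, one_mul, one_smul]
    refine ⟨u⁻¹ • 1, ⟨isSymm_one.smul _, fun i j i' j' hij hij' => ?_⟩,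
      (isUnit_iff_isUnit_det _).mpr (isUnit_det_of_right_inverse hinv), fun q => ?_⟩
    · simp [one_apply_ne hij, one_apply_ne hij']
    · rw [inv_eq_right_inv hinv]
  exact mem_closure_of_tendsto (b := 𝓝[≠] 0)
    (hf0 ▸ (hf.tendsto 0).mono_left nhdsWithin_le_nhds)
    (eventually_mem_nhdsWithin.mono hmem)

lemma minor_eq_minor_of_mem_zeroLocus {x : SymIdx n → ℂ}
    (hx : x ∈ zeroLocus ℂ (vanishingIdeal ℂ (Yset n))) {i j k : Fin n}
    (hij : i ≠ j) (hik : i ≠ k) (hjk : j ≠ k) :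
    toMat n x i j * toMat n x k k - toMat n x i k * toMat n x j k =
      toMat n x i k * toMat n x j j - toMat n x i j * toMat n x j k := by
  have h := eval_eq_zero_of_mem_zeroLocus hx
    (X (i, j) * X (k, k) - X (i, k) * X (j, k) - (X (i, k) * X (j, j) - X (i, j) * X (j, k)))
    fun S hS hU => by
      obtain ⟨d, w, hd⟩ := exists_inverse_relation_of_mem_Lstar hS hU
      simpa [sub_eq_zero] using minor_eq_minor hd hS.1.inv hij hik hjk
  simpa [sub_eq_zero] using h

lemma mul_eq_mul_of_mem_zeroLocus {x : SymIdx n → ℂ}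
    (hx : x ∈ zeroLocus ℂ (vanishingIdeal ℂ (Yset n))) {i j k l : Fin n}
    (hij : i ≠ j) (hil : i ≠ l) (hkj : k ≠ j) (hkl : k ≠ l) :
    toMat n x i j * toMat n x k l = toMat n x i l * toMat n x k j := by
  have h := eval_eq_zero_of_mem_zeroLocus hx (X (i, j) * X (k, l) - X (i, l) * X (k, j))
    fun S hS hU => by
      obtain ⟨d, w, hd⟩ := exists_inverse_relation_of_mem_Lstar hS hU
      simpa [sub_eq_zero] using mul_eq_mul_of_isSymm hd hS.1.inv hij hil hkj hkl
  simpa [sub_eq_zero] using h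

lemma toMat_eq_zero_of_mem_zeroLocus_of_mem_LstarPerp {x : SymIdx n → ℂ}
    (hx : x ∈ zeroLocus ℂ (vanishingIdeal ℂ (Yset n))) (hperp : toMat n x ∈ LstarPerp n) :
    toMat n x = 0 := by
  have hdiag := apply_self_eq_zero_of_mem_LstarPerp hperp
  refine eq_zero_of_triangle_relations (toMat_isSymm x) hdiag
    (sum_sum_eq_zero_of_mem_LstarPerp hperp) (fun i j k hij hik hjk => ?_)
    (fun i j k l hij hil hkj hkl => mul_eq_mul_of_mem_zeroLocus hx hij hil hkj hkl)
  have h := minor_eq_minor_of_mem_zeroLocus hx hij hik hjk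
  rw [hdiag, hdiag] at h
  linear_combination -h

end StarTree

theorem statement15_general (n : ℕ) :
    {x : SymIdx n → ℂ |
        x ∈ MvPolynomial.zeroLocus ℂ (MvPolynomial.vanishingIdeal ℂ (Yset n)) ∧
        toMat n x ∈ LstarPerp n} = {0} := by
  ext x
  simp only [Set.mem_ofPred_eq, Set.mem_singleton_iff]
  constructor
  · rintro ⟨hx, hperp⟩
    funext q
    rw [StarTree.apply_eq_toMat_apply x q,
      StarTree.toMat_eq_zero_of_mem_zeroLocus_of_mem_LstarPerp hx hperp]
    rfl
  · rintro rfl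
    refine ⟨StarTree.closure_subset_zeroLocus_vanishingIdeal _ StarTree.zero_mem_closure_Yset, ?_⟩
    rw [StarTree.toMat_zero]
    exact ⟨isSymm_zero, fun S _ => by simp⟩

/-- Let `L = L_{S_n} ⊆ 𝕊^n` be the space of symmetric matrices with all off-diagonal
entries equal, `Y = {Σ⁻¹ : Σ ∈ L, Σ invertible}`, and let `cl(Y)` be the Zariski closure
of `Y` (the zero locus of the vanishing ideal of `Y` in the coordinates `k_ij`, `i ≤ j`).
Then `cl(Y) ∩ L^⊥ = {0}`: the only matrix lying in both `cl(Y)` and `L^⊥` is the zero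
matrix. -/
theorem statement15 (n : ℕ) (hn : 1 ≤ n) :
    {x : SymIdx n → ℂ |
        x ∈ MvPolynomial.zeroLocus ℂ (MvPolynomial.vanishingIdeal ℂ (Yset n)) ∧
        toMat n x ∈ LstarPerp n} = {0} :=
  statement15_general n
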